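/- Let A : ℝⁿ → ℝᵐ be an injective linear map, u₀ ∈ ℝᵐ, μ > 0, λ > 0, let I be a finite index set, and for each i ∈ I let ∇ᵢ : ℝⁿ → ℝ² be a linear map. Define H(l; a) = √a·‖l‖ − ‖l‖²/2 if ‖l‖ ≤ √a and H(l; a) = a/2 if ‖l‖ > √a (note H ≥ 0), and define the Geman–Yang functional L_GY(u, l) = (1/2)·‖A u − u₀‖² + Σ_{i ∈ I} [ (μ/2)·‖∇ᵢ u − l_i‖² + μ·H(l_i; λ/μ) ] for u ∈ ℝⁿ and l : I → ℝ². Then L_GY is coercive on ℝⁿ × (I → ℝ²): for every c ∈ ℝ, the sublevel set {(u, l) : L_GY(u, l) ≤ c} is bounded. (In particular, any sequence (uᵏ, lᵏ) along which L_GY is nonincreasing is bounded.) -/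

import Mathlib

open Bornology

/-!
Every summand of `L_GY` is nonnegative (the penalty `H` is), so on the sublevel set `{L_GY ≤ c}`
both `‖A u - u₀‖` and every `‖∇ᵢ u - lᵢ‖` are bounded. These are the components of the linear map
`(u, l) ↦ (A u, (∇ᵢ u - lᵢ)ᵢ)`, which is injective because `A` is, hence anti-Lipschitz on the
finite-dimensional space `ℝⁿ × (I → ℝ²)`; the sublevel set is therefore bounded.
-/

open Function Set

/-- `H(l; a) = halfQuadraticPenalty a ‖l‖`; the summands of `L_GY` unfold to it definitionally. -/
noncomputable def halfQuadraticPenalty (a t : ℝ) : ℝ :=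
  if t ≤ √a then √a * t - t ^ 2 / 2 else a / 2

theorem halfQuadraticPenalty_nonneg {a t : ℝ} (ha : 0 ≤ a) (ht : 0 ≤ t) :
    0 ≤ halfQuadraticPenalty a t := by
  unfold halfQuadraticPenalty
  split_ifs with h
  · nlinarith [mul_nonneg ht (sub_nonneg.2 h)]
  · linarith

section Residual

variable {R E G F ι : Type*} [Ring R] [AddCommGroup E] [Module R E] [AddCommGroup G]
  [Module R G] [AddCommGroup F] [Module R F]

def gemanYangResidual (A : E →ₗ[R] G) (grad : ι → E →ₗ[R] F) :
    E × (ι → F) →ₗ[R] G × (ι → F) :=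
  (A ∘ₗ LinearMap.fst R E (ι → F)).prod <| LinearMap.pi fun i =>
    grad i ∘ₗ LinearMap.fst R E (ι → F) - LinearMap.proj i ∘ₗ LinearMap.snd R E (ι → F)

@[simp]
theorem gemanYangResidual_apply (A : E →ₗ[R] G) (grad : ι → E →ₗ[R] F) (p : E × (ι → F)) :
    gemanYangResidual A grad p = (A p.1, fun i => grad i p.1 - p.2 i) :=
  rfl

theorem gemanYangResidual_injective {A : E →ₗ[R] G} (hA : Injective A)
    (grad : ι → E →ₗ[R] F) : Injective (gemanYangResidual A grad) := by
  rw [← LinearMap.ker_eq_bot, LinearMap.ker_eq_bot']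
  rintro ⟨u, l⟩ h
  simp only [gemanYangResidual_apply, Prod.mk_eq_zero, funext_iff, Pi.zero_apply,
    sub_eq_zero] at h
  obtain rfl : u = 0 := hA (h.1.trans (map_zero A).symm)
  exact Prod.ext rfl <| funext fun i => by simp [← h.2 i]

end Residual

theorem LinearMap.isBounded_preimage_of_injective {E F : Type*} [NormedAddCommGroup E]
    [NormedSpace ℝ E] [FiniteDimensional ℝ E] [NormedAddCommGroup F] [NormedSpace ℝ F]
    (f : E →ₗ[ℝ] F) (hf : Injective f) {s : Set F} (hs : IsBounded s) :
    IsBounded (f ⁻¹' s) := by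
  obtain ⟨K, -, hK⟩ := f.injective_iff_antilipschitz.1 hf
  exact hK.isBounded_preimage hs

theorem le_of_add_sum_add_le {ι : Type*} [Fintype ι] {x c : ℝ} {y z : ι → ℝ} (hx : 0 ≤ x)
    (hy : ∀ i, 0 ≤ y i) (hz : ∀ i, 0 ≤ z i) (h : x + ∑ i, (y i + z i) ≤ c) :
    x ≤ c ∧ ∀ i, y i ≤ c := by
  have hyz : ∀ i, 0 ≤ y i + z i := fun i => add_nonneg (hy i) (hz i)
  refine ⟨by linarith [Finset.sum_nonneg fun i (_ : i ∈ Finset.univ) => hyz i], fun i => ?_⟩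
  have := Finset.single_le_sum (fun j _ => hyz j) (Finset.mem_univ i)
  linarith [hz i]

theorem le_sqrt_of_half_mul_sq_le {a c x : ℝ} (ha : 0 < a) (h : a / 2 * x ^ 2 ≤ c) :
    x ≤ √(2 * c / a) :=
  Real.le_sqrt_of_sq_le <| by rw [le_div_iff₀ ha]; linarith

/-- Coercivity of the Geman–Yang functional `L_GY(u, l)`: all its sublevel sets
are bounded. -/
theorem geman_yang_coercive
    {n m : ℕ} {I : Type*} [Fintype I]
    (A : EuclideanSpace ℝ (Fin n) →ₗ[ℝ] EuclideanSpace ℝ (Fin m))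
    (hA : Function.Injective A)
    (u0 : EuclideanSpace ℝ (Fin m))
    (μ lam : ℝ) (hμ : 0 < μ) (hlam : 0 < lam)
    (grad : I → (EuclideanSpace ℝ (Fin n) →ₗ[ℝ] EuclideanSpace ℝ (Fin 2)))
    (LGY : EuclideanSpace ℝ (Fin n) → (I → EuclideanSpace ℝ (Fin 2)) → ℝ)
    (hLGY : ∀ u l, LGY u l = (1 / 2) * ‖A u - u0‖ ^ 2 +
      ∑ i : I, ((μ / 2) * ‖grad i u - l i‖ ^ 2 +
        μ * (if ‖l i‖ ≤ Real.sqrt (lam / μ) then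
              Real.sqrt (lam / μ) * ‖l i‖ - ‖l i‖ ^ 2 / 2
            else (lam / μ) / 2))) :
    ∀ c : ℝ,
      IsBounded {p : EuclideanSpace ℝ (Fin n) × (I → EuclideanSpace ℝ (Fin 2)) |
        LGY p.1 p.2 ≤ c} := by
  intro c
  refine ((gemanYangResidual A grad).isBounded_preimage_of_injective
      (gemanYangResidual_injective hA grad)
      (s := Metric.closedBall u0 √(2 * c / 1) ×ˢ univ.pi fun _ => Metric.closedBall 0 √(2 * c / μ))
      (Metric.isBounded_closedBall.prod <| IsBounded.pi fun _ => Metric.isBounded_closedBall)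
    ).subset ?_
  rintro ⟨u, l⟩ hp
  rw [mem_ofPred_eq, hLGY] at hp
  obtain ⟨hfit, hgrad⟩ := le_of_add_sum_add_le (by positivity) (fun i => by positivity)
    (fun i => mul_nonneg hμ.le <| halfQuadraticPenalty_nonneg (by positivity) (norm_nonneg (l i)))
    hp
  simp only [mem_preimage, gemanYangResidual_apply, mem_prod, Metric.mem_closedBall,
    dist_eq_norm, mem_univ_pi, sub_zero]
  exact ⟨le_sqrt_of_half_mul_sq_le one_pos hfit, fun i => le_sqrt_of_half_mul_sq_le hμ (hgrad i)⟩
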